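/- Let x_1,...,x_n be independent {0,1}-valued random variables with P(x_i = 1) ≤ 1/2 for all i, and let f = Σ_i P(x_i = 1). Then P(Σ_i x_i = 1) ≥ f·4^{-f}. -/

import Mathlib

/-!
A sum of `ℕ`-valued variables equals one exactly when the vector of values is some `Pi.single i 1`,
so independence gives `P(∑ xᵢ = 1) = ∑ᵢ pᵢ ∏_{j ≠ i} (1 - pⱼ)`. By convexity of `t ↦ 4 ^ t`,
`4 ^ (-p)` lies below the chord `1 - p` through `(0, 1)` and `(1/2, 1/2)`, so each product is at
least `4 ^ (-∑_{j ≠ i} pⱼ) ≥ 4 ^ (-f)`.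
-/

open MeasureTheory ProbabilityTheory Finset Function

lemma four_rpow_neg_le_one_sub {p : ℝ} (hp0 : 0 ≤ p) (hp : p ≤ 1 / 2) :
    (4 : ℝ) ^ (-p) ≤ 1 - p := by
  have hhalf : (4 : ℝ) ^ (-(1 / 2) : ℝ) = 1 / 2 := by
    rw [Real.rpow_neg (by norm_num), ← Real.sqrt_eq_rpow, show (4 : ℝ) = 2 ^ 2 by norm_num,
      Real.sqrt_sq (by norm_num)]
    norm_num
  have hconv := (convexOn_rpow_left (b := 4) (by norm_num)).2 (Set.mem_univ 0)
    (Set.mem_univ (-(1 / 2))) (by linarith : 0 ≤ 1 - 2 * p) (by linarith : 0 ≤ 2 * p) (by ring)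
  simp only [smul_eq_mul, hhalf, Real.rpow_zero] at hconv
  calc (4 : ℝ) ^ (-p) = 4 ^ ((1 - 2 * p) * 0 + 2 * p * -(1 / 2)) := by ring_nf
    _ ≤ (1 - 2 * p) * 1 + 2 * p * (1 / 2) := hconv
    _ = 1 - p := by ring

lemma sum_mul_four_rpow_neg_sum_le {ι : Type*} [Fintype ι] [DecidableEq ι] {p : ι → ℝ}
    (hp0 : ∀ i, 0 ≤ p i) (hp : ∀ i, p i ≤ 1 / 2) :
    (∑ i, p i) * (4 : ℝ) ^ (-∑ i, p i) ≤ ∑ i, p i * ∏ j ∈ univ.erase i, (1 - p j) := by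
  rw [sum_mul]
  refine sum_le_sum fun i _ => mul_le_mul_of_nonneg_left ?_ (hp0 i)
  calc (4 : ℝ) ^ (-∑ j, p j) ≤ 4 ^ (-∑ j ∈ univ.erase i, p j) :=
        Real.rpow_le_rpow_of_exponent_le (by norm_num) <| neg_le_neg <|
          sum_le_sum_of_subset_of_nonneg (subset_univ _) fun j _ _ => hp0 j
    _ = ∏ j ∈ univ.erase i, (4 : ℝ) ^ (-p j) := by
        rw [← sum_neg_distrib, Real.rpow_sum_of_pos (by norm_num)]
    _ ≤ ∏ j ∈ univ.erase i, (1 - p j) :=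
        prod_le_prod (fun j _ => by positivity) fun j _ => four_rpow_neg_le_one_sub (hp0 j) (hp j)

lemma Fintype.sum_eq_one_iff_exists_eq_pi_single {ι : Type*} [Fintype ι] [DecidableEq ι]
    (x : ι → ℕ) : ∑ i, x i = 1 ↔ ∃ i, x = Pi.single i 1 := by
  constructor
  · intro h
    obtain ⟨i, hi⟩ : ∃ i, x i ≠ 0 := by
      by_contra! h0
      simp [h0] at h
    rw [← add_sum_erase _ _ (mem_univ i), Nat.add_eq_one_iff] at h
    refine ⟨i, funext fun j => ?_⟩
    obtain ⟨hxi, hrest⟩ := h.resolve_left fun h' => hi h'.1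
    by_cases hj : j = i
    · subst hj; simpa using hxi
    · rw [Pi.single_eq_of_ne hj]
      exact (sum_eq_zero_iff.mp hrest) j (mem_erase.mpr ⟨hj, mem_univ j⟩)
  · rintro ⟨i, rfl⟩
    simp

section

variable {Ω ι : Type*} [MeasurableSpace Ω] {μ : Measure Ω} [Fintype ι] [DecidableEq ι]
  {X : ι → Ω → ℕ}

lemma ProbabilityTheory.iIndepFun.measure_sum_eq_one (hmeas : ∀ i, Measurable (X i))
    (hind : iIndepFun X μ) :
    μ {ω | ∑ i, X i ω = 1} = ∑ i, ∏ j, μ {ω | X j ω = (Pi.single i 1 : ι → ℕ) j} := by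
  have hset : {ω | ∑ i, X i ω = 1} = ⋃ i, ⋂ j, {ω | X j ω = (Pi.single i 1 : ι → ℕ) j} := by
    ext ω
    simp [Fintype.sum_eq_one_iff_exists_eq_pi_single, funext_iff]
  have hdisj : Pairwise (Disjoint on fun i => ⋂ j, {ω | X j ω = (Pi.single i 1 : ι → ℕ) j}) := by
    intro i i' hii'
    refine Set.disjoint_left.mpr fun ω hi hi' => ?_
    simp only [Set.mem_iInter, Set.mem_ofPred_eq] at hi hi'
    simpa [hi, hii'] using hi' i
  rw [hset, measure_iUnion hdisj fun i => .iInter fun j => hmeas j (measurableSet_singleton _),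
    tsum_fintype]
  exact sum_congr rfl fun i _ =>
    hind.meas_iInter fun j => ⟨{(Pi.single i 1 : ι → ℕ) j}, measurableSet_singleton _, rfl⟩

lemma measureReal_eq_zero_eq_one_sub [IsProbabilityMeasure μ] {Y : Ω → ℕ} (hY : Measurable Y)
    (h01 : ∀ ω, Y ω = 0 ∨ Y ω = 1) : μ.real {ω | Y ω = 0} = 1 - μ.real {ω | Y ω = 1} := by
  have hcompl : {ω | Y ω = 0} = {ω | Y ω = 1}ᶜ := by
    ext ω
    rcases h01 ω with h | h <;> simp [h]
  rw [hcompl, measureReal_compl (s := {ω | Y ω = 1}) (hY (measurableSet_singleton 1)),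
    probReal_univ]

lemma ProbabilityTheory.iIndepFun.measureReal_sum_eq_one [IsProbabilityMeasure μ]
    (hmeas : ∀ i, Measurable (X i)) (h01 : ∀ i ω, X i ω = 0 ∨ X i ω = 1) (hind : iIndepFun X μ) :
    μ.real {ω | ∑ i, X i ω = 1} =
      ∑ i, μ.real {ω | X i ω = 1} * ∏ j ∈ univ.erase i, (1 - μ.real {ω | X j ω = 1}) := by
  rw [measureReal_def, hind.measure_sum_eq_one hmeas,
    ENNReal.toReal_sum fun i _ => ENNReal.prod_ne_top fun j _ => measure_ne_top μ _]
  refine sum_congr rfl fun i _ => ?_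
  rw [ENNReal.toReal_prod, ← mul_prod_erase univ _ (mem_univ i)]
  congr 1
  · simp [measureReal_def]
  · refine prod_congr rfl fun j hj => ?_
    rw [Pi.single_eq_of_ne (ne_of_mem_erase hj), ← measureReal_def,
      measureReal_eq_zero_eq_one_sub (hmeas j) (h01 j)]

end

theorem exactly_one_transmit_bound {Ω : Type*} [MeasurableSpace Ω]
    (μ : Measure Ω) [IsProbabilityMeasure μ] (n : ℕ)
    (X : Fin n → Ω → ℕ) (hmeas : ∀ i, Measurable (X i))
    (h01 : ∀ i ω, X i ω = 0 ∨ X i ω = 1)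
    (hind : iIndepFun X μ)
    (hhalf : ∀ i, (μ {ω | X i ω = 1}).toReal ≤ 1 / 2)
    (f : ℝ) (hf : f = ∑ i, (μ {ω | X i ω = 1}).toReal) :
    (μ {ω | (∑ i, X i ω) = 1}).toReal ≥ f * (4 : ℝ) ^ (-f) := by
  have hp0 : ∀ i, 0 ≤ (μ {ω | X i ω = 1}).toReal := fun _ => ENNReal.toReal_nonneg
  rw [ge_iff_le, hf]
  exact (sum_mul_four_rpow_neg_sum_le hp0 hhalf).trans_eq
    (hind.measureReal_sum_eq_one hmeas h01).symm
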